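/- Let μ > 0, λ + 2μ > 0 and g > 0. If u : ℝ³ → ℝ³ is smooth and compactly supported and satisfies on all of ℝ³ the homogeneous simplified gradient elasticity equation (1 − g²Δ)(Δ*·u) = 0, i.e. g² Δ(Δ*·u) − Δ*·u = 0 componentwise, then u ≡ 0. In other words, the fourth-order operator of the simplified gradient elasticity model has trivial kernel among smooth compactly supported vector fields. -/

import Mathlib

open MeasureTheory

noncomputable section

/-- Points of `ℝ³`. -/
abbrev V : Type := Fin 3 → ℝ

/-- `i`-th partial derivative of a scalar field on `ℝ³`. -/
noncomputable def pd (i : Fin 3) (f : V → ℝ) : V → ℝ :=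
  fun x => fderiv ℝ f x (Pi.single i 1)

/-- Divergence of a vector field. -/
noncomputable def divg (u : V → V) : V → ℝ :=
  fun x => ∑ j : Fin 3, pd j (fun y => u y j) x

/-- Componentwise Laplacian of a vector field. -/
noncomputable def vlap (u : V → V) (k : Fin 3) : V → ℝ :=
  fun x => ∑ j : Fin 3, pd j (pd j (fun y => u y k)) x

/-- The strain tensor `e_{jk}(u) = ½(∂_j u_k + ∂_k u_j)`. -/
noncomputable def strain (u : V → V) (j k : Fin 3) : V → ℝ :=
  fun x => (1/2) * (pd j (fun y => u y k) x + pd k (fun y => u y j) x)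

/-- The Lamé (Navier) operator `(Δ*·u)_k = μ (Δu)_k + (λ+μ) ∂_k (div u)`. -/
noncomputable def navier (lam mu : ℝ) (u : V → V) (k : Fin 3) : V → ℝ :=
  fun x => mu * vlap u k x + (lam + mu) * pd k (divg u) x

/-- The gradient of the strain, `(∇e(u))_{ijk} = ∂_i e_{jk}(u)`. -/
noncomputable def gradStrain (u : V → V) (i j k : Fin 3) : V → ℝ :=
  pd i (strain u j k)

/-- Contraction of a sixth order tensor with a triadic:
`(H⫶κ)_{ijk} = Σ_{l,m,n} H_{ijklmn} κ_{lmn}`. -/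
def Hcontr (H : Fin 3 → Fin 3 → Fin 3 → Fin 3 → Fin 3 → Fin 3 → ℝ)
    (κ : Fin 3 → Fin 3 → Fin 3 → ℝ) (i j k : Fin 3) : ℝ :=
  ∑ l : Fin 3, ∑ m : Fin 3, ∑ n : Fin 3, H i j k l m n * κ l m n

/-- A triadic is symmetric if it is symmetric in its last two indices. -/
def SymTriadic (κ : Fin 3 → Fin 3 → Fin 3 → ℝ) : Prop :=
  ∀ i j k, κ i j k = κ i k j

/-- The symmetries `H_{ijklmn} = H_{ikjlmn} = H_{ijklnm} = H_{lmnijk}`. -/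
def Hsym (H : Fin 3 → Fin 3 → Fin 3 → Fin 3 → Fin 3 → Fin 3 → ℝ) : Prop :=
  ∀ i j k l m n, H i j k l m n = H i k j l m n ∧
    H i j k l m n = H i j k l n m ∧ H i j k l m n = H l m n i j k

/-- Positivity of `H` with constant `α` on symmetric triadics. -/
def Hpos (H : Fin 3 → Fin 3 → Fin 3 → Fin 3 → Fin 3 → Fin 3 → ℝ) (α : ℝ) : Prop :=
  ∀ κ : Fin 3 → Fin 3 → Fin 3 → ℝ, SymTriadic κ →
    α * (∑ i : Fin 3, ∑ j : Fin 3, ∑ k : Fin 3, (κ i j k)^2) ≤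
      ∑ i : Fin 3, ∑ j : Fin 3, ∑ k : Fin 3, ∑ l : Fin 3, ∑ m : Fin 3, ∑ n : Fin 3,
        κ i j k * H i j k l m n * κ l m n

/-- The double stress tensor of Mindlin Form II gradient elasticity with constitutive
parameters `a₁,…,a₅`. -/
noncomputable def dstress (a1 a2 a3 a4 a5 : ℝ) (u : V → V) (i j k : Fin 3) : V → ℝ :=
  fun x =>
    (1/2) * a1 * ((if j = k then (1:ℝ) else 0) * vlap u i x
      + (if i = j then (1:ℝ) else 0) * pd k (divg u) x
      + (if j = k then (1:ℝ) else 0) * pd i (divg u) x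
      + (if i = k then (1:ℝ) else 0) * pd j (divg u) x)
    + 2 * a2 * (if j = k then (1:ℝ) else 0) * pd i (divg u) x
    + (1/2) * a3 * ((if i = j then (1:ℝ) else 0) * vlap u k x
      + (if i = j then (1:ℝ) else 0) * pd k (divg u) x
      + (if i = k then (1:ℝ) else 0) * vlap u j x
      + (if i = k then (1:ℝ) else 0) * pd j (divg u) x)
    + a4 * (pd i (pd j (fun y => u y k)) x + pd i (pd k (fun y => u y j)) x)
    + (1/2) * a5 * (2 * pd j (pd k (fun y => u y i)) x
      + pd i (pd j (fun y => u y k)) x + pd i (pd k (fun y => u y j)) x)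

/-!
Each component `w` of `Δ*·u` is a compactly supported solution of `w = g² Δw`; testing this
against `w` gives `∫ w² = -g² ∫ |∇w|² ≤ 0`, so `Δ*·u = 0`. Testing `Δ*·u = 0` against `u` gives
`μ ∫ |∇u|² + (λ + μ) ∫ (div u)² = 0`. Integrating by parts twice,
`∫ (div u)² = Σ_{j,k} ∫ ∂_k u_j ∂_j u_k ≤ ∫ |∇u|²`, so the identity reads
`μ (∫ |∇u|² - ∫ (div u)²) + (λ + 2μ) ∫ (div u)² = 0` with two nonnegative terms. Hence `∇u = 0`,
and a compactly supported field with vanishing gradient is zero.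
-/

open scoped ContDiff

section General

variable {E : Type*} [NormedAddCommGroup E] [NormedSpace ℝ E] [FiniteDimensional ℝ E]
  [MeasurableSpace E] [BorelSpace E] {μ : Measure E} [μ.IsAddHaarMeasure] in
theorem integral_mul_fderiv_eq_neg_fderiv_mul_of_hasCompactSupport {f h : E → ℝ}
    (hf : ContDiff ℝ 1 f) (hh : ContDiff ℝ 1 h) (hcf : HasCompactSupport f) (v : E) :
    ∫ x, f x * fderiv ℝ h x v ∂μ = -∫ x, fderiv ℝ f x v * h x ∂μ := by
  have hf' : Continuous fun x => fderiv ℝ f x v :=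
    (hf.continuous_fderiv one_ne_zero).clm_apply continuous_const
  have hh' : Continuous fun x => fderiv ℝ h x v :=
    (hh.continuous_fderiv one_ne_zero).clm_apply continuous_const
  exact integral_mul_fderiv_eq_neg_fderiv_mul_of_integrable
    ((hf'.mul hh.continuous).integrable_of_hasCompactSupport (hcf.fderiv_apply ℝ v).mul_right)
    ((hf.continuous.mul hh').integrable_of_hasCompactSupport hcf.mul_right)
    ((hf.continuous.mul hh.continuous).integrable_of_hasCompactSupport hcf.mul_right)
    (fun x _ => hf.differentiable one_ne_zero x) (fun x _ => hh.differentiable one_ne_zero x)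

theorem HasCompactSupport.eq_zero_of_fderiv_eq_zero {E F : Type*} [NormedAddCommGroup E]
    [NormedSpace ℝ E] [NoncompactSpace E] [NormedAddCommGroup F] [NormedSpace ℝ F] {f : E → F}
    (hc : HasCompactSupport f) (hf : Differentiable ℝ f) (h : ∀ x, fderiv ℝ f x = 0) : f = 0 := by
  obtain ⟨y, hy⟩ := (Set.ne_univ_iff_exists_notMem _).mp hc.isCompact.ne_univ
  funext x
  rw [is_const_of_fderiv_eq_zero hf h x y, image_eq_zero_of_notMem_tsupport hy, Pi.zero_apply]

variable {X : Type*} [TopologicalSpace X]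

theorem HasCompactSupport.fun_finset_sum {M ι : Type*} [AddCommMonoid M] {F : ι → X → M}
    (s : Finset ι) (h : ∀ i ∈ s, HasCompactSupport (F i)) :
    HasCompactSupport fun x => ∑ i ∈ s, F i x := by
  simpa only [Finset.sum_fn] using HasCompactSupport.finset_sum h

theorem HasCompactSupport.pow {R : Type*} [MonoidWithZero R] {f : X → R}
    (hc : HasCompactSupport f) {n : ℕ} (hn : n ≠ 0) : HasCompactSupport fun x => f x ^ n :=
  hc.comp_left (zero_pow hn)

theorem HasCompactSupport.component {ι M : Type*} [Zero M] {u : X → ι → M}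
    (hc : HasCompactSupport u) (k : ι) : HasCompactSupport (u · k) :=
  hc.comp_left (g := fun v : ι → M => v k) rfl

variable [MeasurableSpace X] [OpensMeasurableSpace X] {μ : Measure X}
  [IsFiniteMeasureOnCompacts μ]

theorem Continuous.integrable_mul_of_hasCompactSupport_left {f h : X → ℝ} (hf : Continuous f)
    (hh : Continuous h) (hc : HasCompactSupport f) : Integrable (fun x => f x * h x) μ :=
  (hf.mul hh).integrable_of_hasCompactSupport hc.mul_right

theorem Continuous.eq_zero_of_integral_eq_zero_of_nonneg [μ.IsOpenPosMeasure] {f : X → ℝ}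
    (hf : Continuous f) (hc : HasCompactSupport f) (hnn : 0 ≤ f) (h : ∫ x, f x ∂μ = 0) :
    f = 0 := by
  by_contra hne
  obtain ⟨x, hx⟩ := Function.ne_iff.mp hne
  exact (hf.integral_pos_of_hasCompactSupport_nonneg_nonzero hc hnn hx).ne' h

end General

theorem integral_finsetSum_finsetSum {X ι κ E : Type*} [MeasurableSpace X] {μ : Measure X}
    [NormedAddCommGroup E] [NormedSpace ℝ E] (s : Finset ι) (t : Finset κ) {F : ι → κ → X → E}
    (hF : ∀ i ∈ s, ∀ j ∈ t, Integrable (F i j) μ) :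
    ∫ x, ∑ i ∈ s, ∑ j ∈ t, F i j x ∂μ = ∑ i ∈ s, ∑ j ∈ t, ∫ x, F i j x ∂μ := by
  rw [integral_finsetSum s fun i hi => integrable_finsetSum t (hF i hi)]
  exact Finset.sum_congr rfl fun i hi => integral_finsetSum t (hF i hi)

theorem Finset.sum_mul_swap_le_sum_sq {R ι : Type*} [CommRing R] [LinearOrder R]
    [IsStrictOrderedRing R] [Fintype ι] (a : ι → ι → R) :
    ∑ i, ∑ j, a i j * a j i ≤ ∑ i, ∑ j, a i j ^ 2 := by
  have hswap : ∑ i, ∑ j, a j i ^ 2 = ∑ i, ∑ j, a i j ^ 2 := Finset.sum_comm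
  have hsq : 0 ≤ ∑ i, ∑ j, (a i j - a j i) ^ 2 := by positivity
  simp only [sub_sq, Finset.sum_add_distrib, Finset.sum_sub_distrib, hswap, mul_assoc,
    ← Finset.mul_sum] at hsq
  linarith

def lap (f : V → ℝ) : V → ℝ := fun x => ∑ j, pd j (pd j f) x

section ScalarFields

variable {f h : V → ℝ}

theorem contDiff_pd (i : Fin 3) {m n : ℕ∞ω} (hf : ContDiff ℝ n f) (hmn : m + 1 ≤ n) :
    ContDiff ℝ m (pd i f) :=
  (hf.fderiv_right hmn).clm_apply contDiff_const

theorem continuous_pd (i : Fin 3) (hf : ContDiff ℝ 1 f) : Continuous (pd i f) :=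
  (hf.continuous_fderiv one_ne_zero).clm_apply continuous_const

theorem HasCompactSupport.pd (hc : HasCompactSupport f) (i : Fin 3) :
    HasCompactSupport (pd i f) :=
  hc.fderiv_apply ℝ _

theorem pd_pd_comm (i j : Fin 3) (hf : ContDiff ℝ 2 f) : pd i (pd j f) = pd j (pd i f) := by
  have hf' : Differentiable ℝ (fderiv ℝ f) := (hf.fderiv_right le_rfl).differentiable one_ne_zero
  have hsnd (v w x : V) :
      fderiv ℝ (fun y => fderiv ℝ f y w) x v = fderiv ℝ (fderiv ℝ f) x v w := by
    rw [fderiv_clm_apply (hf' x) (differentiableAt_const w)]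
    simp
  funext x
  change fderiv ℝ (fun y => fderiv ℝ f y (Pi.single j 1)) x (Pi.single i 1) =
    fderiv ℝ (fun y => fderiv ℝ f y (Pi.single i 1)) x (Pi.single j 1)
  rw [hsnd, hsnd]
  exact hf.contDiffAt.isSymmSndFDerivAt (by simp) _ _

theorem integral_mul_pd (i : Fin 3) (hf : ContDiff ℝ 1 f) (hh : ContDiff ℝ 1 h)
    (hc : HasCompactSupport f) : ∫ x, f x * pd i h x = -∫ x, pd i f x * h x :=
  integral_mul_fderiv_eq_neg_fderiv_mul_of_hasCompactSupport hf hh hc _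

theorem integral_pd_mul_pd_comm (i j : Fin 3) (hf : ContDiff ℝ 2 f) (hh : ContDiff ℝ 1 h)
    (hc : HasCompactSupport f) : ∫ x, pd i f x * pd j h x = ∫ x, pd j f x * pd i h x := by
  rw [integral_mul_pd j (contDiff_pd i hf le_rfl) hh (hc.pd i),
    integral_mul_pd i (contDiff_pd j hf le_rfl) hh (hc.pd j), pd_pd_comm i j hf]

theorem integral_mul_lap (hf : ContDiff ℝ 2 f) (hc : HasCompactSupport f) :
    ∫ x, f x * lap f x = -∫ x, ∑ j, pd j f x ^ 2 := by
  have hpd (j : Fin 3) : ContDiff ℝ 1 (pd j f) := contDiff_pd j hf le_rfl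
  calc ∫ x, f x * lap f x = ∑ j, ∫ x, f x * pd j (pd j f) x := by
        simp only [lap, Finset.mul_sum]
        exact integral_finsetSum _ fun j _ =>
          hf.continuous.integrable_mul_of_hasCompactSupport_left (continuous_pd j (hpd j)) hc
    _ = ∑ j, -∫ x, pd j f x * pd j f x := by
        congr! 1 with j
        exact integral_mul_pd j (hf.of_le (by simp)) (hpd j) hc
    _ = -∫ x, ∑ j, pd j f x ^ 2 := by
        simp only [sq, Finset.sum_neg_distrib]
        rw [integral_finsetSum _ fun j _ =>
          (hpd j).continuous.integrable_mul_of_hasCompactSupport_left (hpd j).continuous (hc.pd j)]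

theorem eq_zero_of_eq_mul_lap (hf : ContDiff ℝ 2 f) (hc : HasCompactSupport f) {c : ℝ}
    (hc0 : 0 ≤ c) (h : ∀ x, f x = c * lap f x) : f = 0 := by
  have hgrad : 0 ≤ ∫ x, ∑ j, pd j f x ^ 2 := integral_nonneg fun x => by positivity
  have hnn : 0 ≤ fun x => f x ^ 2 := fun x => sq_nonneg (f x)
  have hsq : ∫ x, f x ^ 2 = -(c * ∫ x, ∑ j, pd j f x ^ 2) :=
    calc ∫ x, f x ^ 2 = ∫ x, c * (f x * lap f x) := by
          congr! 2 with x
          rw [sq]; nth_rw 2 [h x]; ring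
      _ = -(c * ∫ x, ∑ j, pd j f x ^ 2) := by
          rw [integral_const_mul, integral_mul_lap hf hc, mul_neg]
  have hint : ∫ x, f x ^ 2 = 0 :=
    le_antisymm (by linarith [mul_nonneg hc0 hgrad]) (integral_nonneg hnn)
  have hsq0 : (fun x => f x ^ 2) = 0 :=
    (hf.continuous.pow 2).eq_zero_of_integral_eq_zero_of_nonneg (hc.pow two_ne_zero) hnn hint
  funext x
  exact pow_eq_zero_iff two_ne_zero |>.mp (congrFun hsq0 x)

theorem eq_zero_of_pd_eq_zero (hf : Differentiable ℝ f) (hc : HasCompactSupport f)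
    (h : ∀ i, pd i f = 0) : f = 0 := by
  refine hc.eq_zero_of_fderiv_eq_zero hf fun x => ?_
  refine ContinuousLinearMap.coe_injective ((Pi.basisFun ℝ (Fin 3)).ext fun i => ?_)
  simpa [pd] using congrFun (h i) x

end ScalarFields

def gradNormSq (u : V → V) : V → ℝ := fun x => ∑ k, ∑ j, pd j (u · k) x ^ 2

section VectorFields

variable {u : V → V}

theorem contDiff_navier (lam mu : ℝ) (k : Fin 3) (hu : ContDiff ℝ ∞ u) :
    ContDiff ℝ ∞ (navier lam mu u k) := by
  have hpd {f : V → ℝ} (i : Fin 3) (hf : ContDiff ℝ ∞ f) : ContDiff ℝ ∞ (pd i f) :=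
    contDiff_pd i hf (by simp)
  have hdivg : ContDiff ℝ ∞ (divg u) := ContDiff.sum fun j _ => hpd j (contDiff_pi.mp hu j)
  exact (contDiff_const.mul (ContDiff.sum fun j _ => hpd j (hpd j (contDiff_pi.mp hu k)))).add
    (contDiff_const.mul (hpd k hdivg))

theorem HasCompactSupport.divg (hc : HasCompactSupport u) : HasCompactSupport (divg u) :=
  .fun_finset_sum _ fun j _ => (hc.component j).pd j

theorem HasCompactSupport.navier (hc : HasCompactSupport u) (lam mu : ℝ) (k : Fin 3) :
    HasCompactSupport (navier lam mu u k) := by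
  have hvlap : HasCompactSupport (vlap u k) :=
    .fun_finset_sum _ fun j _ => ((hc.component k).pd j).pd j
  exact hvlap.mul_left.add (hc.divg.pd k).mul_left

theorem integral_sq_divg_le (hu : ContDiff ℝ 2 u) (hc : HasCompactSupport u) :
    ∫ x, divg u x ^ 2 ≤ ∫ x, gradNormSq u x := by
  have hu' (k : Fin 3) : ContDiff ℝ 2 (u · k) := contDiff_pi.mp hu k
  have hpd (i k : Fin 3) : Continuous (pd i (u · k)) := continuous_pd i ((hu' k).of_le (by simp))
  have hint (i j k l : Fin 3) : Integrable fun x => pd i (u · j) x * pd k (u · l) x :=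
    (hpd i j).integrable_mul_of_hasCompactSupport_left (hpd k l) ((hc.component j).pd i)
  calc ∫ x, divg u x ^ 2 = ∫ x, ∑ j, ∑ k, pd j (u · j) x * pd k (u · k) x := by
        simp only [divg, sq, Finset.sum_mul_sum]
    _ = ∫ x, ∑ j, ∑ k, pd k (u · j) x * pd j (u · k) x := by
        rw [integral_finsetSum_finsetSum _ _ fun j _ k _ => hint j j k k,
          integral_finsetSum_finsetSum _ _ fun j _ k _ => hint k j j k]
        exact Finset.sum_congr rfl fun j _ => Finset.sum_congr rfl fun k _ =>
          integral_pd_mul_pd_comm j k (hu' j) ((hu' k).of_le (by simp)) (hc.component j)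
    _ ≤ ∫ x, gradNormSq u x :=
        integral_mono
          (integrable_finsetSum _ fun j _ => integrable_finsetSum _ fun k _ => hint k j j k)
          (integrable_finsetSum _ fun k _ => integrable_finsetSum _ fun j _ => by
            simpa only [sq] using hint j k j k)
          fun x => Finset.sum_mul_swap_le_sum_sq fun j k => pd k (u · j) x

theorem sum_integral_mul_vlap (hu : ContDiff ℝ 2 u) (hc : HasCompactSupport u) :
    ∑ k, ∫ x, u x k * vlap u k x = -∫ x, gradNormSq u x := by
  have hu₁ (k : Fin 3) : ContDiff ℝ 1 (u · k) := (contDiff_pi.mp hu k).of_le (by simp)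
  unfold gradNormSq
  rw [integral_finsetSum _ fun k _ => ?_, ← Finset.sum_neg_distrib]
  · exact Finset.sum_congr rfl fun k _ => integral_mul_lap (contDiff_pi.mp hu k) (hc.component k)
  · refine integrable_finsetSum _ fun j _ => ?_
    simpa only [sq] using (continuous_pd j (hu₁ k)).integrable_mul_of_hasCompactSupport_left
      (continuous_pd j (hu₁ k)) ((hc.component k).pd j)

theorem sum_integral_mul_pd_divg (hu : ContDiff ℝ 2 u) (hc : HasCompactSupport u) :
    ∑ k, ∫ x, u x k * pd k (divg u) x = -∫ x, divg u x ^ 2 := by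
  have hu₁ (k : Fin 3) : ContDiff ℝ 1 (u · k) := (contDiff_pi.mp hu k).of_le (by simp)
  have hdivg : ContDiff ℝ 1 (divg u) :=
    ContDiff.sum fun j _ => contDiff_pd j (contDiff_pi.mp hu j) le_rfl
  simp only [integral_mul_pd _ (hu₁ _) hdivg (hc.component _), Finset.sum_neg_distrib]
  rw [← integral_finsetSum _ fun k _ =>
    (continuous_pd k (hu₁ k)).integrable_mul_of_hasCompactSupport_left hdivg.continuous
      ((hc.component k).pd k)]
  simp only [← Finset.sum_mul, sq]
  rfl

theorem integral_sum_mul_navier (lam mu : ℝ) (hu : ContDiff ℝ 2 u) (hc : HasCompactSupport u) :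
    ∫ x, ∑ k, u x k * navier lam mu u k x =
      -(mu * ∫ x, gradNormSq u x) - (lam + mu) * ∫ x, divg u x ^ 2 := by
  have hu' (k : Fin 3) : ContDiff ℝ 2 (u · k) := contDiff_pi.mp hu k
  have hdivg : ContDiff ℝ 1 (divg u) := ContDiff.sum fun j _ => contDiff_pd j (hu' j) le_rfl
  have hvlap (k : Fin 3) : Integrable fun x => u x k * vlap u k x :=
    (hu' k).continuous.integrable_mul_of_hasCompactSupport_left
      (continuous_finsetSum _ fun j _ => continuous_pd j (contDiff_pd j (hu' k) le_rfl))
      (hc.component k)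
  have hpd_divg (k : Fin 3) : Integrable fun x => u x k * pd k (divg u) x :=
    (hu' k).continuous.integrable_mul_of_hasCompactSupport_left (continuous_pd k hdivg)
      (hc.component k)
  calc ∫ x, ∑ k, u x k * navier lam mu u k x
      = ∫ x, (mu * ∑ k, u x k * vlap u k x) + (lam + mu) * ∑ k, u x k * pd k (divg u) x := by
        simp only [navier, mul_add, Finset.sum_add_distrib, mul_left_comm (u _ _), Finset.mul_sum]
    _ = mu * (∑ k, ∫ x, u x k * vlap u k x) + (lam + mu) * ∑ k, ∫ x, u x k * pd k (divg u) x := by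
        rw [integral_add ((integrable_finsetSum _ fun k _ => hvlap k).const_mul _)
            ((integrable_finsetSum _ fun k _ => hpd_divg k).const_mul _),
          integral_const_mul, integral_const_mul, integral_finsetSum _ fun k _ => hvlap k,
          integral_finsetSum _ fun k _ => hpd_divg k]
    _ = -(mu * ∫ x, gradNormSq u x) - (lam + mu) * ∫ x, divg u x ^ 2 := by
        rw [sum_integral_mul_vlap hu hc, sum_integral_mul_pd_divg hu hc]
        ring

theorem integral_gradNormSq_eq_zero_of_navier_eq_zero {lam mu : ℝ} (hmu : 0 < mu)
    (hlm : 0 < lam + 2 * mu) (hu : ContDiff ℝ 2 u) (hc : HasCompactSupport u)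
    (h : ∀ k, navier lam mu u k = 0) : ∫ x, gradNormSq u x = 0 := by
  have henergy := integral_sum_mul_navier lam mu hu hc
  simp only [h, Pi.zero_apply, mul_zero, Finset.sum_const_zero, integral_zero] at henergy
  have hle := integral_sq_divg_le hu hc
  have hnn : 0 ≤ ∫ x, divg u x ^ 2 := integral_nonneg fun x => sq_nonneg (divg u x)
  have hdivg : ∫ x, divg u x ^ 2 = 0 := by
    have hP : (lam + 2 * mu) * ∫ x, divg u x ^ 2 = 0 := by
      linarith [mul_nonneg hmu.le (sub_nonneg.mpr hle), mul_nonneg hlm.le hnn]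
    exact (mul_eq_zero.mp hP).resolve_left hlm.ne'
  rw [hdivg] at henergy
  exact (mul_eq_zero.mp (by linarith : mu * _ = 0)).resolve_left hmu.ne'

theorem eq_zero_of_integral_gradNormSq_eq_zero (hu : ContDiff ℝ 1 u) (hc : HasCompactSupport u)
    (h : ∫ x, gradNormSq u x = 0) : u = 0 := by
  have hu' (k : Fin 3) : ContDiff ℝ 1 (u · k) := contDiff_pi.mp hu k
  have hgrad : (fun x => ∑ k, ∑ j, pd j (u · k) x ^ 2) = 0 :=
    Continuous.eq_zero_of_integral_eq_zero_of_nonneg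
      (continuous_finsetSum _ fun k _ => continuous_finsetSum _ fun j _ =>
        (continuous_pd j (hu' k)).pow 2)
      (.fun_finset_sum _ fun k _ => .fun_finset_sum _ fun j _ =>
        ((hc.component k).pd j).pow two_ne_zero)
      (fun x => by positivity) h
  funext x k
  refine congrFun (eq_zero_of_pd_eq_zero ((hu' k).differentiable one_ne_zero) (hc.component k)
    fun j => funext fun y => ?_) x
  have hk := (Fintype.sum_eq_zero_iff_of_nonneg fun k => by positivity).mp (congrFun hgrad y)
  have hkj := (Fintype.sum_eq_zero_iff_of_nonneg fun j => by positivity).mp (congrFun hk k)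
  exact pow_eq_zero_iff two_ne_zero |>.mp (congrFun hkj j)

end VectorFields

theorem simplified_gradient_elasticity_trivial_kernel_general
    (lam mu g : ℝ) (hmu : 0 < mu) (hlm : 0 < lam + 2 * mu)
    (u : V → V) (hu : ContDiff ℝ (⊤ : ℕ∞) u) (hc : HasCompactSupport u)
    (heq : ∀ x : V, ∀ k : Fin 3,
      g^2 * vlap (fun y k' => navier lam mu u k' y) k x - navier lam mu u k x = 0) :
    ∀ x : V, u x = 0 := by
  have hu₂ : ContDiff ℝ 2 u := hu.of_le ENat.LEInfty.out
  have hnavier (k : Fin 3) : navier lam mu u k = 0 :=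
    eq_zero_of_eq_mul_lap ((contDiff_navier lam mu k hu).of_le ENat.LEInfty.out)
      (hc.navier lam mu k) (sq_nonneg g) fun x => (sub_eq_zero.mp (heq x k)).symm
  have hgrad := integral_gradNormSq_eq_zero_of_navier_eq_zero hmu hlm hu₂ hc hnavier
  intro x
  rw [eq_zero_of_integral_gradNormSq_eq_zero (hu.of_le (by simp)) hc hgrad, Pi.zero_apply]

/-- the simplified fourth order gradient elasticity operator
`(1 − g²Δ)Δ*·` has trivial kernel among smooth compactly supported vector fields. -/
theorem simplified_gradient_elasticity_trivial_kernel
    (lam mu g : ℝ) (hmu : 0 < mu) (hlm : 0 < lam + 2 * mu) (hg : 0 < g)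
    (u : V → V) (hu : ContDiff ℝ (⊤ : ℕ∞) u) (hc : HasCompactSupport u)
    (heq : ∀ x : V, ∀ k : Fin 3,
      g^2 * vlap (fun y k' => navier lam mu u k' y) k x - navier lam mu u k x = 0) :
    ∀ x : V, u x = 0 :=
  simplified_gradient_elasticity_trivial_kernel_general lam mu g hmu hlm u hu hc heq
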